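/- arXiv:1905.04546 — 3 statements merged into one kernel-verified Lean document; each statement's English description precedes it below -/
import Mathlib

section
/- The chain T = T_1 > T_2 > ... > T_n = 1, where T_i is the set of upper unitriangular matrices over a commutative ring K with their first i−1 superdiagonals equal to zero, is the lower central series of T = UT(n,K): specifically, the commutator subgroup [T, T_i] equals T_{i+1} when K = ℤ or ℚ, and in general [T, T_i] ≤ T_{i+1}. -/
/-- `g` is upper unitriangular: ones on the diagonal, zeros below it. -/
def IsUnitri {n : ℕ} {K : Type*} [CommRing K] (g : Matrix (Fin n) (Fin n) K) : Prop :=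
  (∀ j, g j j = 1) ∧ ∀ j k : Fin n, (k : ℕ) < (j : ℕ) → g j k = 0

/-- `g` lies in `T_i`: `g` is upper unitriangular and its first `i - 1`
superdiagonals vanish. -/
def InT {n : ℕ} (i : ℕ) {K : Type*} [CommRing K] (g : Matrix (Fin n) (Fin n) K) : Prop :=
  IsUnitri g ∧ ∀ j k : Fin n, (j : ℕ) < (k : ℕ) → (k : ℕ) < (j : ℕ) + i → g j k = 0

open scoped commutatorElement

/-!
Write `g ∈ T_a` as `1 + A` with `A` supported on the superdiagonals of index `≥ a`; these
supports add under multiplication, so for `g = 1 + A ∈ T_a` and `u = 1 + B ∈ T_b` the identity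
`⁅g, u⁆ - 1 = (AB - BA) (ug)⁻¹`, with `(ug)⁻¹` upper triangular, puts `⁅g, u⁆` in `T_{a+b}`.

Conversely, for `m ≥ i + 1` the transvection `1 + c E_{p,p+m}` is the commutator of
`1 + c E_{p,p+1} ∈ T_1` and `1 + E_{p+1,p+m} ∈ T_i`. Multiplying `w ∈ T_m` on the left by such
transvections clears its `m`-th superdiagonal row by row and lands in `T_{m+1}`; a downward
induction on `m`, starting from `T_n = 1`, gives `T_{i+1} ≤ [T_1, T_i]`.
-/

open Matrix

section Filtration

variable {K : Type*} [CommRing K] {n : ℕ}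

variable (K n) in
def upperFrom (m : ℕ) : AddSubgroup (Matrix (Fin n) (Fin n) K) where
  carrier := {A | ∀ j k : Fin n, (k : ℕ) < j + m → A j k = 0}
  add_mem' hA hB j k hjk := by simp [hA j k hjk, hB j k hjk]
  zero_mem' _ _ _ := rfl
  neg_mem' hA j k hjk := by simp [hA j k hjk]

theorem mem_upperFrom {m : ℕ} {A : Matrix (Fin n) (Fin n) K} :
    A ∈ upperFrom K n m ↔ ∀ j k : Fin n, (k : ℕ) < j + m → A j k = 0 :=
  Iff.rfl

theorem upperFrom_antitone : Antitone (upperFrom K n) :=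
  fun _ _ hab _ hA j k hjk => hA j k (by omega)

theorem mem_upperFrom_zero_iff {A : Matrix (Fin n) (Fin n) K} :
    A ∈ upperFrom K n 0 ↔ A.IsUpperTriangular :=
  ⟨fun hA _ _ hjk => hA _ _ hjk, fun hA _ _ hjk => hA hjk⟩

theorem one_mem_upperFrom_zero : (1 : Matrix (Fin n) (Fin n) K) ∈ upperFrom K n 0 :=
  mem_upperFrom_zero_iff.mpr blockTriangular_one

theorem mul_mem_upperFrom {a b : ℕ} {A B : Matrix (Fin n) (Fin n) K}
    (hA : A ∈ upperFrom K n a) (hB : B ∈ upperFrom K n b) : A * B ∈ upperFrom K n (a + b) := by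
  intro j k hjk
  refine (mul_apply ..).trans (Finset.sum_eq_zero fun l _ => ?_)
  by_cases hl : (l : ℕ) < j + a
  · rw [hA j l hl, zero_mul]
  · rw [hB l k (by omega), mul_zero]

theorem single_mem_upperFrom {m : ℕ} {p q : Fin n} (h : (p : ℕ) + m ≤ q) (c : K) :
    single p q c ∈ upperFrom K n m := by
  intro j k hjk
  apply single_apply_of_ne
  rintro ⟨rfl, rfl⟩
  omega

theorem eq_zero_of_mem_upperFrom {m : ℕ} (hm : n ≤ m) {A : Matrix (Fin n) (Fin n) K}
    (hA : A ∈ upperFrom K n m) : A = 0 :=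
  ext fun j k => hA j k (by omega)

theorem mul_sub_one_mem_upperFrom {m : ℕ} {x y : Matrix (Fin n) (Fin n) K}
    (hx : x - 1 ∈ upperFrom K n m) (hy : y - 1 ∈ upperFrom K n m) :
    x * y - 1 ∈ upperFrom K n m := by
  have hxy : x * y - 1 = (x - 1) * (y - 1) + (x - 1) + (y - 1) := by noncomm_ring
  rw [hxy]
  exact add_mem (add_mem (upperFrom_antitone (by omega) (mul_mem_upperFrom hx hy)) hx) hy

theorem inv_mem_upperFrom_zero {g : (Matrix (Fin n) (Fin n) K)ˣ}
    (hg : g.val ∈ upperFrom K n 0) : (g⁻¹).val ∈ upperFrom K n 0 := by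
  rw [mem_upperFrom_zero_iff, coe_units_inv]
  exact blockTriangular_inv_of_blockTriangular (mem_upperFrom_zero_iff.mp hg)

theorem mem_upperFrom_zero_of_sub_one_mem {m : ℕ} {x : Matrix (Fin n) (Fin n) K}
    (hx : x - 1 ∈ upperFrom K n m) : x ∈ upperFrom K n 0 := by
  simpa using add_mem (upperFrom_antitone m.zero_le hx) one_mem_upperFrom_zero

theorem inv_sub_one_mem_upperFrom {m : ℕ} {g : (Matrix (Fin n) (Fin n) K)ˣ}
    (hg : g.val - 1 ∈ upperFrom K n m) : (g⁻¹).val - 1 ∈ upperFrom K n m := by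
  have hinv : (g⁻¹).val - 1 = -((g.val - 1) * (g⁻¹).val) := by
    rw [sub_mul, g.mul_inv, one_mul, neg_sub]
  rw [hinv]
  exact neg_mem <|
    mul_mem_upperFrom hg (inv_mem_upperFrom_zero (mem_upperFrom_zero_of_sub_one_mem hg))

theorem commutator_sub_one_mem_upperFrom {a b : ℕ} {g u : (Matrix (Fin n) (Fin n) K)ˣ}
    (hg : g.val - 1 ∈ upperFrom K n a) (hu : u.val - 1 ∈ upperFrom K n b) :
    ⁅g, u⁆.val - 1 ∈ upperFrom K n (a + b) := by
  have hug : (u * g).val - 1 ∈ upperFrom K n 0 :=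
    mul_sub_one_mem_upperFrom (upperFrom_antitone b.zero_le hu) (upperFrom_antitone a.zero_le hg)
  have hbracket : (g.val - 1) * (u.val - 1) - (u.val - 1) * (g.val - 1) ∈ upperFrom K n (a + b) :=
    sub_mem (mul_mem_upperFrom hg hu) (add_comm b a ▸ mul_mem_upperFrom hu hg)
  have hdiff : g.val * u.val - u.val * g.val =
      (g.val - 1) * (u.val - 1) - (u.val - 1) * (g.val - 1) := by noncomm_ring
  rw [show ⁅g, u⁆ = g * u * (u * g)⁻¹ by group, ← (u * g).mul_inv, Units.val_mul, ← sub_mul,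
    Units.val_mul, Units.val_mul, hdiff]
  exact mul_mem_upperFrom (b := 0) hbracket
    (inv_mem_upperFrom_zero (mem_upperFrom_zero_of_sub_one_mem hug))

end Filtration

section UnitriSubgroup

variable {K : Type*} [CommRing K] {n : ℕ}

theorem inT_iff_sub_one_mem_upperFrom {i : ℕ} {g : Matrix (Fin n) (Fin n) K} :
    InT i g ↔ g - 1 ∈ upperFrom K n (max i 1) := by
  simp only [InT, IsUnitri, mem_upperFrom, Matrix.sub_apply, one_apply]
  constructor
  · rintro ⟨⟨hdiag, hlower⟩, hupper⟩ j k hjk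
    rcases lt_trichotomy (k : ℕ) j with hkj | hkj | hkj
    · rw [hlower j k hkj, if_neg (Fin.ne_of_val_ne (by omega)), sub_zero]
    · rw [Fin.ext hkj.symm, hdiag, if_pos rfl, sub_self]
    · rw [hupper j k hkj (by omega), if_neg (Fin.ne_of_val_ne (by omega)), sub_zero]
  · intro h
    refine ⟨⟨fun j => ?_, fun j k hkj => ?_⟩, fun j k hjk hki => ?_⟩
    · simpa [sub_eq_zero] using h j j (by omega)
    · simpa [Fin.ne_of_val_ne (by omega : (j : ℕ) ≠ k)] using h j k (by omega)
    · simpa [Fin.ne_of_val_ne (by omega : (j : ℕ) ≠ k)] using h j k (by omega)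

theorem inT_iff_sub_one_mem_upperFrom_of_one_le {i : ℕ} (hi : 1 ≤ i)
    {g : Matrix (Fin n) (Fin n) K} : InT i g ↔ g - 1 ∈ upperFrom K n i := by
  rw [inT_iff_sub_one_mem_upperFrom, max_eq_left hi]

variable (K n) in
def unitriSubgroup (i : ℕ) : Subgroup (Matrix (Fin n) (Fin n) K)ˣ where
  carrier := {g | InT i (g : Matrix (Fin n) (Fin n) K)}
  mul_mem' hx hy := inT_iff_sub_one_mem_upperFrom.mpr <|
    mul_sub_one_mem_upperFrom (inT_iff_sub_one_mem_upperFrom.mp hx)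
      (inT_iff_sub_one_mem_upperFrom.mp hy)
  one_mem' := inT_iff_sub_one_mem_upperFrom.mpr <| by simp
  inv_mem' hx := inT_iff_sub_one_mem_upperFrom.mpr <|
    inv_sub_one_mem_upperFrom (inT_iff_sub_one_mem_upperFrom.mp hx)

theorem mem_unitriSubgroup {i : ℕ} {g : (Matrix (Fin n) (Fin n) K)ˣ} :
    g ∈ unitriSubgroup K n i ↔ InT i (g : Matrix (Fin n) (Fin n) K) :=
  Iff.rfl

theorem commutator_unitriSubgroup_le {a b : ℕ} (ha : 1 ≤ a) (hb : 1 ≤ b) :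
    ⁅unitriSubgroup K n a, unitriSubgroup K n b⁆ ≤ unitriSubgroup K n (a + b) := by
  refine Subgroup.commutator_le.mpr fun g hg u hu => ?_
  rw [mem_unitriSubgroup, inT_iff_sub_one_mem_upperFrom_of_one_le (by omega)]
  exact commutator_sub_one_mem_upperFrom ((inT_iff_sub_one_mem_upperFrom_of_one_le ha).mp hg)
    ((inT_iff_sub_one_mem_upperFrom_of_one_le hb).mp hu)

theorem unitriSubgroup_eq_bot {m : ℕ} (hm : n ≤ m) : unitriSubgroup K n m = ⊥ := by
  refine eq_bot_iff.mpr fun g hg => Units.val_eq_one.mp (sub_eq_zero.mp ?_)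
  exact eq_zero_of_mem_upperFrom (le_max_of_le_left hm) (inT_iff_sub_one_mem_upperFrom.mp hg)

theorem InT.succ_of_superdiag_eq_zero {m : ℕ} {x : Matrix (Fin n) (Fin n) K} (hx : InT m x)
    (h : ∀ j k : Fin n, (k : ℕ) = j + m → x j k = 0) : InT (m + 1) x :=
  ⟨hx.1, fun j k hjk hk => (Nat.lt_succ_iff_lt_or_eq.mp hk).elim (hx.2 j k hjk) (h j k)⟩

end UnitriSubgroup

section Transvection

variable {ι R : Type*} [Fintype ι] [DecidableEq ι] [CommRing R]

def transvectionUnit {p q : ι} (hpq : p ≠ q) (c : R) : (Matrix ι ι R)ˣ where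
  val := transvection p q c
  inv := transvection p q (-c)
  val_inv := by rw [transvection_mul_transvection_same _ _ hpq, add_neg_cancel, transvection_zero]
  inv_val := by rw [transvection_mul_transvection_same _ _ hpq, neg_add_cancel, transvection_zero]

theorem commutator_transvectionUnit {p q r : ι} (hpq : p ≠ q) (hqr : q ≠ r) (hpr : p ≠ r)
    (a b : R) :
    ⁅transvectionUnit hpq a, transvectionUnit hqr b⁆ = transvectionUnit hpr (a * b) := by
  ext : 1
  simp [commutatorElement_def, transvectionUnit, transvection, Matrix.add_mul, Matrix.mul_add,
    hpq.symm, hqr.symm, hpr.symm, ← single_neg]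
  abel

end Transvection

section Generation

variable {K : Type*} [CommRing K] {n : ℕ}

theorem transvectionUnit_mem_unitriSubgroup {m : ℕ} {p q : Fin n} (hpq : p ≠ q)
    (h : (p : ℕ) + m ≤ q) (c : K) : transvectionUnit hpq c ∈ unitriSubgroup K n m := by
  have hpq' : (p : ℕ) + max m 1 ≤ q := by have := Fin.val_ne_of_ne hpq; omega
  rw [mem_unitriSubgroup, inT_iff_sub_one_mem_upperFrom]
  simpa [transvectionUnit, transvection] using single_mem_upperFrom hpq' c

theorem transvectionUnit_mem_commutator {i : ℕ} (hi : 1 ≤ i) {p q : Fin n} (hpq : p ≠ q)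
    (h : (p : ℕ) + (i + 1) ≤ q) (c : K) :
    transvectionUnit hpq c ∈ ⁅unitriSubgroup K n 1, unitriSubgroup K n i⁆ := by
  obtain ⟨p', hp'⟩ : ∃ p' : Fin n, (p' : ℕ) = p + 1 := ⟨⟨p + 1, by omega⟩, rfl⟩
  have hpp' : p ≠ p' := Fin.ne_of_val_ne (by omega)
  have hp'q : p' ≠ q := Fin.ne_of_val_ne (by omega)
  rw [← mul_one c, ← commutator_transvectionUnit hpp' hp'q hpq]
  exact Subgroup.commutator_mem_commutator
    (transvectionUnit_mem_unitriSubgroup hpp' hp'.ge c)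
    (transvectionUnit_mem_unitriSubgroup hp'q (by omega) 1)

theorem exists_mem_commutator_mul_mem_unitriSubgroup_succ {i m : ℕ} (hi : 1 ≤ i)
    (hm : i + 1 ≤ m) {w : (Matrix (Fin n) (Fin n) K)ˣ} (hw : w ∈ unitriSubgroup K n m) :
    ∃ h ∈ ⁅unitriSubgroup K n 1, unitriSubgroup K n i⁆, h * w ∈ unitriSubgroup K n (m + 1) := by
  suffices ∀ r : ℕ, ∃ h ∈ ⁅unitriSubgroup K n 1, unitriSubgroup K n i⁆,
      h * w ∈ unitriSubgroup K n m ∧ ∀ j k : Fin n, (j : ℕ) < r → (k : ℕ) = j + m →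
        (h * w).val j k = 0 by
    obtain ⟨h, hh, hhw, hzero⟩ := this n
    exact ⟨h, hh, hhw.succ_of_superdiag_eq_zero fun j k => hzero j k j.isLt⟩
  intro r
  induction r with
  | zero => exact ⟨1, one_mem _, by simpa using hw, fun _ _ hj => absurd hj (Nat.not_lt_zero _)⟩
  | succ r ih =>
    obtain ⟨h, hh, hhw, hzero⟩ := ih
    by_cases hr : r + m < n
    · let p : Fin n := ⟨r, by omega⟩
      let q : Fin n := ⟨r + m, hr⟩
      have hpq : p ≠ q := Fin.ne_of_val_ne (by simp [p, q]; omega)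
      refine ⟨transvectionUnit hpq (-(h * w).val p q) * h,
        mul_mem (transvectionUnit_mem_commutator hi hpq (by simp [p, q]; omega) _) hh, ?_, ?_⟩
      · rw [mul_assoc]
        exact mul_mem (transvectionUnit_mem_unitriSubgroup hpq (by simp [p, q]) _) hhw
      · intro j k hj hk
        rw [mul_assoc, Units.val_mul]
        by_cases hjp : j = p
        · obtain rfl : k = q := Fin.ext (by simp [hk, hjp, q, p])
          rw [hjp, transvectionUnit, transvection_mul_apply_same, hhw.1.1, mul_one, add_neg_cancel]
        · rw [transvectionUnit, transvection_mul_apply_of_ne _ _ _ _ hjp]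
          exact hzero j k (by have := Fin.val_ne_of_ne hjp; simp [p] at this; omega) hk
    · exact ⟨h, hh, hhw, fun j k hj hk => hzero j k (by omega) hk⟩

theorem unitriSubgroup_le_commutator {i m : ℕ} (hi : 1 ≤ i) (hm : i + 1 ≤ m) :
    unitriSubgroup K n m ≤ ⁅unitriSubgroup K n 1, unitriSubgroup K n i⁆ := by
  refine Nat.decreasingInduction' (P := fun k => unitriSubgroup K n k ≤ _)
    (fun k _ hmk hk w hw => ?_) (Nat.le_add_right m n)
    (by rw [unitriSubgroup_eq_bot (Nat.le_add_left n m)]; exact bot_le)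
  obtain ⟨h, hh, hhw⟩ := exists_mem_commutator_mul_mem_unitriSubgroup_succ hi (hm.trans hmk) hw
  simpa using mul_mem (inv_mem hh) (hk hhw)

theorem commutator_unitriSubgroup {i : ℕ} (hi : 1 ≤ i) :
    ⁅unitriSubgroup K n 1, unitriSubgroup K n i⁆ = unitriSubgroup K n (i + 1) :=
  le_antisymm (add_comm 1 i ▸ commutator_unitriSubgroup_le le_rfl hi)
    (unitriSubgroup_le_commutator hi le_rfl)

theorem closure_commutators_eq_unitriSubgroup {i : ℕ} (hi : 1 ≤ i) :
    Subgroup.closure {c : (Matrix (Fin n) (Fin n) K)ˣ |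
      ∃ g u : (Matrix (Fin n) (Fin n) K)ˣ,
        InT 1 (g : Matrix (Fin n) (Fin n) K) ∧ InT i (u : Matrix (Fin n) (Fin n) K) ∧
        c = ⁅g, u⁆} = unitriSubgroup K n (i + 1) := by
  rw [← commutator_unitriSubgroup hi, Subgroup.commutator_def]
  congr 1
  ext c
  exact ⟨fun ⟨g, u, hg, hu, hc⟩ => ⟨g, hg, u, hu, hc.symm⟩,
    fun ⟨g, hg, u, hu, hc⟩ => ⟨g, u, hg, hu, hc.symm⟩⟩

end Generation

/-- The chain `T = T_1 > T_2 > ⋯ > T_n = 1` is the lower central series of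
`T = UT(n,K)`: in general `[T, T_i] ≤ T_{i+1}`, with equality when `K = ℤ` or `K = ℚ`. -/
theorem commutator_InT {n : ℕ} (i : ℕ) (hi : 1 ≤ i) :
    (∀ (K : Type) [CommRing K] (g u : (Matrix (Fin n) (Fin n) K)ˣ),
      InT 1 (g : Matrix (Fin n) (Fin n) K) → InT i (u : Matrix (Fin n) (Fin n) K) →
      InT (i + 1) ((⁅g, u⁆ : (Matrix (Fin n) (Fin n) K)ˣ) : Matrix (Fin n) (Fin n) K)) ∧
    (∀ w : (Matrix (Fin n) (Fin n) ℤ)ˣ,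
      w ∈ Subgroup.closure {c : (Matrix (Fin n) (Fin n) ℤ)ˣ |
          ∃ g u : (Matrix (Fin n) (Fin n) ℤ)ˣ,
            InT 1 (g : Matrix (Fin n) (Fin n) ℤ) ∧ InT i (u : Matrix (Fin n) (Fin n) ℤ) ∧
            c = ⁅g, u⁆} ↔
        InT (i + 1) (w : Matrix (Fin n) (Fin n) ℤ)) ∧
    (∀ w : (Matrix (Fin n) (Fin n) ℚ)ˣ,
      w ∈ Subgroup.closure {c : (Matrix (Fin n) (Fin n) ℚ)ˣ |
          ∃ g u : (Matrix (Fin n) (Fin n) ℚ)ˣ,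
            InT 1 (g : Matrix (Fin n) (Fin n) ℚ) ∧ InT i (u : Matrix (Fin n) (Fin n) ℚ) ∧
            c = ⁅g, u⁆} ↔
        InT (i + 1) (w : Matrix (Fin n) (Fin n) ℚ)) := by
  refine ⟨fun K _ g u hg hu => ?_, fun w => ?_, fun w => ?_⟩
  · exact (commutator_unitriSubgroup hi).le (Subgroup.commutator_mem_commutator hg hu)
  · exact SetLike.ext_iff.mp (closure_commutators_eq_unitriSubgroup hi) w
  · exact SetLike.ext_iff.mp (closure_commutators_eq_unitriSubgroup hi) w
end

section
/- Let H be a subgroup of a group G of finite torsion-free rank. If the isolator I_G(H) = {x ∈ G : x^k ∈ H for some positive integer k} equals G, then h(G) = h(H). -/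
/-- A finite subnormal series of `G` whose factors are torsion or infinite cyclic,
with a marking `isInf` of the infinite cyclic factors. -/
structure HirschSeries (G : Type*) [Group G] where
  len : ℕ
  chain : Fin (len + 1) → Subgroup G
  bot_eq : chain 0 = ⊥
  top_eq : chain (Fin.last len) = ⊤
  le_succ : ∀ i : Fin len, chain i.castSucc ≤ chain i.succ
  normal : ∀ i : Fin len, ((chain i.castSucc).subgroupOf (chain i.succ)).Normal
  isInf : Fin len → Bool
  factor : ∀ i : Fin len,
    letI := normal i
    if isInf i then
      Nonempty ((chain i.succ ⧸ (chain i.castSucc).subgroupOf (chain i.succ)) ≃* Multiplicative ℤ)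
    else
      Monoid.IsTorsion (chain i.succ ⧸ (chain i.castSucc).subgroupOf (chain i.succ))

/-- The number of infinite cyclic factors in the series. -/
def HirschSeries.count {G : Type*} [Group G] (s : HirschSeries G) : ℕ :=
  (Finset.univ.filter fun i => s.isInf i = true).card

/-- `G` has torsion-free rank (Hirsch number) `h`. -/
def HasHirsch (G : Type*) [Group G] (h : ℕ) : Prop :=
  ∃ s : HirschSeries G, s.count = h


section
variable {G : Type*} [Group G]

lemma aux_normal (H : Subgroup G) {A B : Subgroup G} [hn : (A.subgroupOf B).Normal] :
    ((A.subgroupOf H).subgroupOf (B.subgroupOf H)).Normal := by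
  constructor
  intro x hx g
  rw [Subgroup.mem_subgroupOf, Subgroup.mem_subgroupOf] at hx ⊢
  have := hn.conj_mem ⟨((x : H) : G), x.2⟩ (by rwa [Subgroup.mem_subgroupOf])
    ⟨((g : H) : G), g.2⟩
  rwa [Subgroup.mem_subgroupOf] at this

lemma aux_exists (H : Subgroup G) (A B : Subgroup G) [hn : (A.subgroupOf B).Normal] :
    letI := aux_normal (hn := hn) H
    ∃ f : ((B.subgroupOf H) ⧸ ((A.subgroupOf H).subgroupOf (B.subgroupOf H))) →*
        (B ⧸ A.subgroupOf B),
      Function.Injective f ∧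
      ∀ x : ↥(B.subgroupOf H),
        f (QuotientGroup.mk x) = QuotientGroup.mk (⟨((x : H) : G), x.2⟩ : ↥B) := by
  letI := aux_normal (hn := hn) H
  let j : ↥(B.subgroupOf H) →* ↥B :=
    { toFun := fun x => ⟨((x : H) : G), x.2⟩
      map_one' := rfl
      map_mul' := fun _ _ => rfl }
  let φ := (QuotientGroup.mk' (A.subgroupOf B)).comp j
  have hker : φ.ker = (A.subgroupOf H).subgroupOf (B.subgroupOf H) := by
    ext x
    simp [φ, j, MonoidHom.mem_ker, QuotientGroup.eq_one_iff, Subgroup.mem_subgroupOf]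
  let eq1 := QuotientGroup.quotientMulEquivOfEq hker.symm
  refine ⟨(QuotientGroup.kerLift φ).comp eq1.toMonoidHom, ?_, fun x => ?_⟩
  · intro u v huv
    exact eq1.injective (QuotientGroup.kerLift_injective φ huv)
  simp only [MonoidHom.coe_comp, Function.comp_apply, MulEquiv.coe_toMonoidHom,
    QuotientGroup.quotientMulEquivOfEq_mk, QuotientGroup.kerLift_mk]
  rfl

lemma intSubgroupEquiv (R : Subgroup (Multiplicative ℤ)) (hR : R ≠ ⊥) :
    Nonempty (↥R ≃* Multiplicative ℤ) := by
  set S : AddSubgroup ℤ := Subgroup.toAddSubgroup' R with hS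
  obtain ⟨b, hb⟩ := Int.subgroup_cyclic S
  have hb0 : b ≠ 0 := by
    rintro rfl
    apply hR
    ext x
    simp only [Subgroup.mem_bot]
    constructor
    · intro hx
      have h1 : Multiplicative.toAdd x ∈ S := hx
      rw [hb, AddSubgroup.closure_singleton_zero, AddSubgroup.mem_bot] at h1
      exact Multiplicative.toAdd.injective (by simpa using h1)
    · rintro rfl; exact R.one_mem
  have hmem : ∀ n : ℤ, Multiplicative.ofAdd (n * b) ∈ R := by
    intro n
    show (n * b) ∈ S
    rw [hb]
    exact AddSubgroup.mem_closure_singleton.mpr ⟨n, by simp [zsmul_eq_mul]⟩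
  let g : Multiplicative ℤ →* ↥R :=
    { toFun := fun n => ⟨Multiplicative.ofAdd (Multiplicative.toAdd n * b), hmem _⟩
      map_one' := by ext; simp
      map_mul' := by intro m n; ext; simp [add_mul] }
  have hinj : Function.Injective g := by
    intro m n h
    have h2 : Multiplicative.ofAdd (Multiplicative.toAdd m * b)
        = Multiplicative.ofAdd (Multiplicative.toAdd n * b) := congrArg Subtype.val h
    have h3 := Multiplicative.ofAdd.injective h2
    have h4 := mul_right_cancel₀ hb0 h3
    exact Multiplicative.toAdd.injective h4
  have hsurj : Function.Surjective g := by
    rintro ⟨x, hx⟩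
    have h1 : Multiplicative.toAdd x ∈ S := hx
    rw [hb] at h1
    obtain ⟨n, hn⟩ := AddSubgroup.mem_closure_singleton.mp h1
    refine ⟨Multiplicative.ofAdd n, Subtype.ext ?_⟩
    show Multiplicative.ofAdd (n * b) = x
    rw [← smul_eq_mul, hn]
    rfl
  exact ⟨(MulEquiv.ofBijective g ⟨hinj, hsurj⟩).symm⟩

end


/-- If `G` has finite torsion-free rank `a` and the isolator of `H ≤ G` in `G` is all
of `G` (every element of `G` has a positive power in `H`), then `h(H) = h(G)`. -/
theorem hirsch_eq_of_isolator_eq_top {G : Type*} [Group G] (H : Subgroup G)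
    (a : ℕ) (hG : HasHirsch G a)
    (hiso : ∀ x : G, ∃ k : ℕ, 0 < k ∧ x ^ k ∈ H) :
    HasHirsch H a := by
  obtain ⟨s, hs⟩ := hG
  have hnormal : ∀ i : Fin s.len,
      (((s.chain i.castSucc).subgroupOf H).subgroupOf
        ((s.chain i.succ).subgroupOf H)).Normal := fun i =>
    letI := s.normal i
    aux_normal H
  refine ⟨⟨s.len, fun i => (s.chain i).subgroupOf H,
    by show (s.chain 0).subgroupOf H = ⊥; rw [s.bot_eq, Subgroup.bot_subgroupOf],
    by show (s.chain (Fin.last s.len)).subgroupOf H = ⊤; rw [s.top_eq, Subgroup.top_subgroupOf],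
    fun i => Subgroup.comap_mono (s.le_succ i),
    hnormal, s.isInf, ?_⟩, ?_⟩
  · intro i
    letI := s.normal i
    letI := hnormal i
    have hfac := s.factor i
    obtain ⟨f, hfinj, hfmk⟩ := aux_exists H (s.chain i.castSucc) (s.chain i.succ)
    cases hbool : s.isInf i
    · rw [if_neg (by simp [hbool])]
      rw [if_neg (by simp [hbool])] at hfac
      intro q
      obtain ⟨n, hn, hq⟩ := isOfFinOrder_iff_pow_eq_one.mp (hfac (f q))
      refine isOfFinOrder_iff_pow_eq_one.mpr ⟨n, hn, hfinj ?_⟩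
      rw [map_pow, hq, map_one]
    · rw [if_pos (by simp [hbool])]
      rw [if_pos (by simp [hbool])] at hfac
      obtain ⟨e⟩ := hfac
      let ψ := e.toMonoidHom.comp f
      have hψ : Function.Injective ψ := fun u v huv => hfinj (e.injective huv)
      have hR : ψ.range ≠ ⊥ := by
        -- find a nontrivial element
        obtain ⟨b, hbq⟩ := QuotientGroup.mk'_surjective
          ((s.chain i.castSucc).subgroupOf (s.chain i.succ))
          (e.symm (Multiplicative.ofAdd 1))
        obtain ⟨k, hk, hkH⟩ := hiso (b : G)
        have hbB : ((b : G)) ^ k ∈ s.chain i.succ := pow_mem b.2 k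
        let x : ↥((s.chain i.succ).subgroupOf H) := ⟨⟨(b : G) ^ k, hkH⟩, hbB⟩
        have hx1 : f (QuotientGroup.mk x) = QuotientGroup.mk (b ^ k) := by
          rw [hfmk x]
          congr 1
        have hx2 : ψ (QuotientGroup.mk x) = Multiplicative.ofAdd (k : ℤ) := by
          show e (f (QuotientGroup.mk x)) = _
          rw [hx1]
          have : (QuotientGroup.mk (b ^ k) :
              (s.chain i.succ) ⧸ (s.chain i.castSucc).subgroupOf (s.chain i.succ))
              = (QuotientGroup.mk b) ^ k := by
            simp
          rw [this]
          have hb' : (QuotientGroup.mk b :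
              (s.chain i.succ) ⧸ (s.chain i.castSucc).subgroupOf (s.chain i.succ))
              = e.symm (Multiplicative.ofAdd 1) := hbq
          rw [hb', map_pow, MulEquiv.apply_symm_apply]
          rw [← ofAdd_nsmul]
          congr 1
          simp
        intro hbot
        have : ψ (QuotientGroup.mk x) = 1 := by
          have : ψ (QuotientGroup.mk x) ∈ ψ.range := ⟨_, rfl⟩
          rwa [hbot, Subgroup.mem_bot] at this
        rw [hx2] at this
        have : (k : ℤ) = 0 := Multiplicative.ofAdd.injective this
        omega
      obtain ⟨eR⟩ := intSubgroupEquiv ψ.range hR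
      exact ⟨(MonoidHom.ofInjective hψ).trans eR⟩
  · simpa [HirschSeries.count] using hs
end

section
/- Let G be a finitely generated solvable minimax group with trivial finite residual. Then G has a non-trivial torsion-free abelian normal subgroup. -/
/-- A factor group satisfies the maximal condition on subgroups iff every subgroup is
finitely generated. -/
def MaxCond (Q : Type*) [Group Q] : Prop := ∀ K : Subgroup Q, K.FG

/-- The minimal condition on subgroups: every descending chain of subgroups stabilizes. -/
def MinCond (Q : Type*) [Group Q] : Prop :=
  ∀ f : ℕ → Subgroup Q, (∀ k, f (k + 1) ≤ f k) → ∃ N, ∀ m, N ≤ m → f m = f N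

/-- `G` is minimax: it has a finite subnormal series whose factors satisfy max or min. -/
def Minimax (G : Type*) [Group G] : Prop :=
  ∃ (len : ℕ) (c : Fin (len + 1) → Subgroup G),
    c 0 = ⊥ ∧ c (Fin.last len) = ⊤ ∧ (∀ i : Fin len, c i.castSucc ≤ c i.succ) ∧
    ∀ i : Fin len, ∃ h : ((c i.castSucc).subgroupOf (c i.succ)).Normal,
      letI := h
      MaxCond (c i.succ ⧸ (c i.castSucc).subgroupOf (c i.succ)) ∨
      MinCond (c i.succ ⧸ (c i.castSucc).subgroupOf (c i.succ))


/-!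
Let `U` be the last infinite term of the derived series of `G`, so that `⁅U, U⁆` is finite.
Locally finite subgroups of a minimax group satisfy the minimal condition on subgroups, and a
residually finite group has no infinite subgroup with the minimal condition. A torsion group with
finite derived subgroup is locally finite, so `U` contains an element `u` of infinite order. Some
power `c` of `u` centralizes the finite normal subgroup `⁅U, U⁆`, and then `c ^ |⁅U, U⁆|` is
central in `U`. Hence the centre `Z` of `U` is an abelian normal subgroup of `G` containing elements
of infinite order. Its torsion elements form a locally finite, hence finite, subgroup of some order
`e`, and the `e`-th powers of the elements of `Z` form the required subgroup.
-/

open Subgroup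

section ChainConditions

variable {M Q : Type*} [Group M] [Group Q]

theorem MinCond.wellFoundedLT (h : MinCond Q) : WellFoundedLT (Subgroup Q) :=
  (wellFoundedGT_iff_monotone_chain_condition (α := (Subgroup Q)ᵒᵈ)).2 fun a ↦ by
    obtain ⟨N, hN⟩ := h (fun k ↦ OrderDual.ofDual (a k)) fun k ↦ a.mono k.le_succ
    exact ⟨N, fun m hm ↦ (hN m hm).symm⟩

theorem wellFoundedLT_subgroup_of_injective (θ : M →* Q) (hθ : Function.Injective θ)
    [WellFoundedLT (Subgroup Q)] : WellFoundedLT (Subgroup M) :=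
  (gc_map_comap θ).monotone_l.strictMono_of_injective (map_injective hθ) |>.wellFoundedLT

theorem wellFoundedLT_subgroup_of_ker_range (φ : M →* Q) [WellFoundedLT (Subgroup φ.ker)]
    [WellFoundedLT (Subgroup φ.range)] : WellFoundedLT (Subgroup M) := by
  refine StrictMono.wellFoundedLT
    (f := fun H : Subgroup M ↦ (H.comap φ.ker.subtype, H.map φ.rangeRestrict)) fun H K hHK ↦ ?_
  refine lt_of_le_of_ne ⟨comap_mono hHK.le, map_mono hHK.le⟩ fun h ↦ hHK.ne ?_
  obtain ⟨hker, hrange⟩ := Prod.mk.inj h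
  refine le_antisymm hHK.le fun x hx ↦ ?_
  -- a `y ∈ H` with the same image as `x` differs from `x` by an element of `K ⊓ ker φ = H ⊓ ker φ`
  obtain ⟨y, hy, hyx⟩ : φ.rangeRestrict x ∈ H.map φ.rangeRestrict :=
    hrange.symm ▸ mem_map_of_mem _ hx
  have hker_mem : y⁻¹ * x ∈ φ.ker := by
    rw [MonoidHom.mem_ker, map_mul, map_inv, inv_mul_eq_one]
    exact congrArg Subtype.val hyx
  have : (⟨y⁻¹ * x, hker_mem⟩ : φ.ker) ∈ H.comap φ.ker.subtype :=
    hker.symm ▸ K.mul_mem (K.inv_mem (hHK.le hy)) hx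
  simpa using H.mul_mem hy this

end ChainConditions

def Group.IsLocallyFinite (M : Type*) [Group M] : Prop :=
  ∀ S : Subgroup M, S.FG → Finite S

namespace Group.IsLocallyFinite

variable {M Q : Type*} [Group M] [Group Q]

theorem of_injective (hQ : IsLocallyFinite Q) (θ : M →* Q) (hθ : Function.Injective θ) :
    IsLocallyFinite M := fun S hS ↦ by
  have : Group.FG S := (Group.fg_iff_subgroup_fg S).mpr hS
  have : Finite (S.map θ) := hQ _ <| (Group.fg_iff_subgroup_fg _).mp <|
    Group.fg_of_surjective (θ.subgroupMap_surjective S)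
  exact .of_equiv _ (S.equivMapOfInjective θ hθ).symm.toEquiv

theorem of_surjective (hM : IsLocallyFinite M) (φ : M →* Q) (hφ : Function.Surjective φ) :
    IsLocallyFinite Q := fun S ⟨t, ht⟩ ↦ by
  classical
  have : Finite (closure (t.image (Function.surjInv hφ) : Set M)) := hM _ ⟨_, rfl⟩
  have hS : (closure (t.image (Function.surjInv hφ) : Set M)).map φ = S := by
    rw [MonoidHom.map_closure, Finset.coe_image, ← Set.image_comp,
      Function.comp_surjInv hφ, Set.image_id, ht]
  exact hS ▸ .of_surjective _ (φ.subgroupMap_surjective _)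

theorem finite [Group.FG M] (hM : IsLocallyFinite M) : Finite M :=
  have := hM ⊤ (Group.fg_def.mp inferInstance)
  .of_equiv _ topEquiv.toEquiv

end Group.IsLocallyFinite

theorem Group.isLocallyFinite_of_finite_commutator {M : Type*} [Group M] (htor : IsMulTorsion M)
    [Finite (commutator M)] : IsLocallyFinite M := fun S hS ↦ by
  have : Group.FG S := (Group.fg_iff_subgroup_fg S).mpr hS
  have : Group.FG (Abelianization S) := Group.fg_of_surjective (QuotientGroup.mk'_surjective _)
  have : Finite (S ⧸ commutator S) := CommGroup.finite_of_fg_isMulTorsion (Abelianization S) <|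
    (htor.subgroup S).of_surjective (QuotientGroup.mk'_surjective _)
  have hle : (commutator S).map S.subtype ≤ commutator M :=
    (map_subtype_commutator S).trans_le (commutator_mono le_top le_top)
  have : Finite (commutator S) := .of_injective
    (fun x ↦ (⟨x.1.1, hle (mem_map_of_mem _ x.2)⟩ : commutator M))
    fun x y h ↦ Subtype.ext (Subtype.ext (congrArg Subtype.val h :))
  exact Finite.of_subgroup_quotient (commutator S)

namespace Subgroup

variable {G : Type*} [Group G]

def torsionOfIsMulCommutative (Z : Subgroup G) [IsMulCommutative Z] : Subgroup G where
  carrier := {x | x ∈ Z ∧ IsOfFinOrder x}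
  mul_mem' hx hy :=
    ⟨Z.mul_mem hx.1 hy.1, Commute.isOfFinOrder_mul (setLike_mul_comm hx.1 hy.1) hx.2 hy.2⟩
  one_mem' := ⟨Z.one_mem, IsOfFinOrder.one⟩
  inv_mem' hx := ⟨Z.inv_mem hx.1, hx.2.inv⟩

def powImage (Z : Subgroup G) [IsMulCommutative Z] (e : ℕ) : Subgroup G where
  carrier := (· ^ e) '' Z
  mul_mem' := by
    rintro _ _ ⟨x, hx, rfl⟩ ⟨y, hy, rfl⟩
    exact ⟨x * y, Z.mul_mem hx hy, Commute.mul_pow (setLike_mul_comm hx hy) e⟩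
  one_mem' := ⟨1, Z.one_mem, one_pow e⟩
  inv_mem' := by
    rintro _ ⟨x, hx, rfl⟩
    exact ⟨x⁻¹, Z.inv_mem hx, inv_pow x e⟩

variable (Z : Subgroup G) [IsMulCommutative Z] (e : ℕ)

theorem pow_mem_powImage {x : G} (hx : x ∈ Z) : x ^ e ∈ Z.powImage e := ⟨x, hx, rfl⟩

instance : IsMulCommutative (Z.powImage e) := .of_setLike_mul_comm <| by
  rintro _ ⟨x, hx, rfl⟩ _ ⟨y, hy, rfl⟩
  exact Commute.pow_pow (setLike_mul_comm hx hy) e e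

instance [Z.Normal] : (Z.powImage e).Normal where
  conj_mem := by
    rintro _ ⟨x, hx, rfl⟩ g
    exact ⟨g * x * g⁻¹, Normal.conj_mem ‹_› x hx g, conj_pow⟩

theorem eq_one_of_mem_powImage_of_pow_eq_one
    (hZ : ∀ x ∈ Z, IsOfFinOrder x → x ^ e = 1) {a : G} (ha : a ∈ Z.powImage e) {k : ℕ}
    (hk : 0 < k) (hak : a ^ k = 1) : a = 1 := by
  obtain ⟨x, hx, rfl⟩ := ha
  rcases Nat.eq_zero_or_pos e with rfl | he
  · exact pow_zero x
  · exact hZ x hx (isOfFinOrder_iff_pow_eq_one.mpr ⟨e * k, by positivity, by rwa [pow_mul]⟩)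

end Subgroup

section MinimaxResiduallyFinite

variable {G : Type*} [Group G]

theorem Minimax.wellFoundedLT_subgroup (hmm : Minimax G) (T : Subgroup G)
    (hT : Group.IsLocallyFinite T) : WellFoundedLT (Subgroup T) := by
  obtain ⟨n, c, hc0, hcn, -, hfac⟩ := hmm
  suffices h : ∀ i, WellFoundedLT (Subgroup ↥(T ⊓ c i)) by
    have := h (Fin.last n)
    exact wellFoundedLT_subgroup_of_injective (inclusion (le_inf le_rfl (hcn ▸ le_top)))
      (inclusion_injective _)
  intro i
  induction i using Fin.induction with
  | zero =>
    have : Finite ↥(T ⊓ c 0) := by rw [hc0, inf_bot_eq]; infer_instance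
    infer_instance
  | succ i ih =>
    obtain ⟨_, hfactor⟩ := hfac i
    let φ : ↥(T ⊓ c i.succ) →* _ :=
      (QuotientGroup.mk' ((c i.castSucc).subgroupOf (c i.succ))).comp (inclusion inf_le_right)
    have : WellFoundedLT (Subgroup φ.ker) := by
      refine wellFoundedLT_subgroup_of_injective
        (((T ⊓ c i.succ).subtype.comp φ.ker.subtype).codRestrict (T ⊓ c i.castSucc) fun x ↦
          ⟨x.1.2.1, ?_⟩) fun x y h ↦ Subtype.ext (Subtype.ext (congrArg Subtype.val h :))
      exact (QuotientGroup.eq_one_iff (N := (c i.castSucc).subgroupOf (c i.succ)) _).mp x.2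
    have : WellFoundedLT (Subgroup φ.range) := by
      rcases hfactor with hmax | hmin
      · have hlf := (hT.of_injective (inclusion inf_le_left) (inclusion_injective _)).of_surjective
          φ.rangeRestrict φ.rangeRestrict_surjective
        have : Group.FG φ.range := (Group.fg_iff_subgroup_fg _).mpr (hmax _)
        have := hlf.finite
        infer_instance
      · have := hmin.wellFoundedLT
        exact wellFoundedLT_subgroup_of_injective φ.range.subtype φ.range.subtype_injective
    exact wellFoundedLT_subgroup_of_ker_range φ

/-- A minimal element `T ⊓ K` among the intersections of `T` with subgroups of finite index is
trivial, so `T` embeds into the finite coset space `G ⧸ K`. -/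
theorem finite_of_wellFoundedLT_subgroup
    (hres : (⨅ (H : Subgroup G) (_ : H.FiniteIndex), H) = ⊥) (T : Subgroup G)
    [WellFoundedLT (Subgroup T)] : Finite T := by
  obtain ⟨_, ⟨K, hK, rfl⟩, hmin⟩ := wellFounded_lt.has_min
    {S | ∃ K : Subgroup G, K.FiniteIndex ∧ K.subgroupOf T = S} ⟨_, ⊤, inferInstance, rfl⟩
  suffices hbot : K.subgroupOf T = ⊥ by
    have := hbot ▸ instFiniteIndex_subgroupOf K T
    exact Nat.finite_of_card_ne_zero (index_bot (G := T) ▸ this.index_ne_zero)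
  by_contra hne
  obtain ⟨⟨a, ha⟩, ha1⟩ := ne_bot_iff_exists_ne_one.mp hne
  obtain ⟨L, hL, haL⟩ : ∃ L : Subgroup G, L.FiniteIndex ∧ (a : G) ∉ L := by
    by_contra! h
    exact ha1 (Subtype.ext (Subtype.ext
      (by simpa [hres] using mem_iInf.mpr fun H ↦ mem_iInf.mpr (h H))))
  refine hmin _ ⟨K ⊓ L, inferInstance, rfl⟩ <|
    lt_of_le_of_ne (comap_mono inf_le_left) fun h ↦ haL ?_
  exact (mem_subgroupOf.mp (h ▸ ha : a ∈ (K ⊓ L).subgroupOf T)).2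

theorem Minimax.finite_of_isLocallyFinite (hmm : Minimax G)
    (hres : (⨅ (H : Subgroup G) (_ : H.FiniteIndex), H) = ⊥) (T : Subgroup G)
    (hT : Group.IsLocallyFinite T) : Finite T :=
  have := hmm.wellFoundedLT_subgroup T hT
  finite_of_wellFoundedLT_subgroup hres T

theorem Minimax.exists_not_isOfFinOrder (hmm : Minimax G)
    (hres : (⨅ (H : Subgroup G) (_ : H.FiniteIndex), H) = ⊥) (U : Subgroup G) [Infinite U]
    [Finite ↥⁅U, U⁆] : ∃ u ∈ U, ¬IsOfFinOrder u := by
  by_contra! htor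
  have : Finite ((commutator U).map U.subtype) := map_subtype_commutator U ▸ ‹_›
  have : Finite (commutator U) :=
    .of_equiv _ ((commutator U).equivMapOfInjective _ U.subtype_injective).symm.toEquiv
  have : Finite U := hmm.finite_of_isLocallyFinite hres U <|
    Group.isLocallyFinite_of_finite_commutator fun x ↦ Submonoid.isOfFinOrder_coe.mp (htor x x.2)
  exact not_finite U

theorem Minimax.exists_pow_eq_one_of_isOfFinOrder (hmm : Minimax G)
    (hres : (⨅ (H : Subgroup G) (_ : H.FiniteIndex), H) = ⊥) (Z : Subgroup G)
    [IsMulCommutative Z] : ∃ e, 0 < e ∧ ∀ x ∈ Z, IsOfFinOrder x → x ^ e = 1 := by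
  set T := Z.torsionOfIsMulCommutative
  have : IsMulCommutative T := .of_setLike_mul_comm fun a ha b hb ↦ setLike_mul_comm ha.1 hb.1
  have : Finite (commutator T) := by rw [commutator_eq_bot]; infer_instance
  have : Finite T := hmm.finite_of_isLocallyFinite hres T <|
    Group.isLocallyFinite_of_finite_commutator fun x ↦ Submonoid.isOfFinOrder_coe.mp x.2.2
  exact ⟨Nat.card T, Nat.card_pos, fun x hx hfin ↦
    orderOf_dvd_iff_pow_eq_one.mp (T.orderOf_dvd_natCard ⟨hx, hfin⟩)⟩

end MinimaxResiduallyFinite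

section Centralizers

variable {G : Type*} [Group G]

open scoped commutatorElement

theorem exists_infinite_normal_finite_commutator [Infinite G] (hG : Group.IsSolvable G) :
    ∃ U : Subgroup G, U.Normal ∧ Infinite U ∧ Finite ↥⁅U, U⁆ := by
  classical
  have hex : ∃ n, Finite (derivedSeries G n) := by
    obtain ⟨n, hn⟩ := hG.solvable
    exact ⟨n, hn ▸ inferInstance⟩
  obtain ⟨k, hk⟩ : ∃ k, Nat.find hex = k + 1 := Nat.exists_eq_succ_of_ne_zero fun h ↦ by
    have := Nat.find_spec hex
    rw [h, derivedSeries_zero] at this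
    have : Finite G := .of_equiv _ topEquiv.toEquiv
    exact not_finite G
  refine ⟨derivedSeries G k, derivedSeries_normal G k, ?_, ?_⟩
  · exact not_finite_iff_infinite.mp (Nat.find_min hex (by omega))
  · rw [← derivedSeries_succ, ← hk]
    exact Nat.find_spec hex

theorem exists_pow_mem_centralizer (F : Subgroup G) [F.Normal] [Finite F] (g : G) :
    ∃ m, 0 < m ∧ g ^ m ∈ centralizer F := by
  obtain ⟨m, hm, hgm⟩ :=
    (isOfFinOrder_of_finite (MulAut.conjNormal (H := F) g)).exists_pow_eq_one
  refine ⟨m, hm, mem_centralizer_iff.mpr fun h hh ↦ ?_⟩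
  have := congrArg (fun σ : MulAut F ↦ (σ ⟨h, hh⟩ : G)) hgm
  simp only [← map_pow, MulAut.conjNormal_apply, MulAut.one_apply] at this
  exact (mul_inv_eq_iff_eq_mul.mp this).symm

/-- Conjugating `c` by `x ∈ U` multiplies it by `⁅x, c⁆ ∈ ⁅U, U⁆`, which commutes with `c`. -/
theorem pow_card_commutator_mem_centralizer {U : Subgroup G} {c : G}
    (hcU : c ∈ U) (hc : c ∈ centralizer (⁅U, U⁆ : Subgroup G)) :
    c ^ Nat.card ↥⁅U, U⁆ ∈ centralizer U := by
  refine mem_centralizer_iff.mpr fun x hx ↦ ?_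
  have hz : ⁅x, c⁆ ∈ ⁅U, U⁆ := commutator_mem_commutator hx hcU
  have hzc : Commute ⁅x, c⁆ c := mem_centralizer_iff.mp hc _ hz
  have hze : ⁅x, c⁆ ^ Nat.card ↥⁅U, U⁆ = 1 :=
    orderOf_dvd_iff_pow_eq_one.mp (Subgroup.orderOf_dvd_natCard _ hz)
  have : x * c ^ Nat.card ↥⁅U, U⁆ * x⁻¹ = c ^ Nat.card ↥⁅U, U⁆ := by
    rw [← conj_pow, show x * c * x⁻¹ = ⁅x, c⁆ * c by group, hzc.mul_pow, hze, one_mul]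
  exact mul_inv_eq_iff_eq_mul.mp this

end Centralizers

theorem exists_torsionFree_abelian_normal_general {G : Type*} [Group G]
    (hsolv : IsSolvable G) (hmm : Minimax G) (hinf : Infinite G)
    (hres : (⨅ (H : Subgroup G) (_ : H.FiniteIndex), H) = ⊥) :
    ∃ A : Subgroup G, A ≠ ⊥ ∧ A.Normal ∧ (∀ a ∈ A, ∀ b ∈ A, a * b = b * a) ∧
      ∀ a ∈ A, ∀ k : ℕ, 0 < k → a ^ k = 1 → a = 1 := by
  obtain ⟨U, hU, hUinf, hUU⟩ := exists_infinite_normal_finite_commutator hsolv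
  obtain ⟨u, huU, hu⟩ := hmm.exists_not_isOfFinOrder hres U
  obtain ⟨m, hm, hum⟩ := exists_pow_mem_centralizer ⁅U, U⁆ u
  set c := (u ^ m) ^ Nat.card ↥⁅U, U⁆
  set Z := centralizer U ⊓ U
  have : IsMulCommutative Z := .of_setLike_mul_comm fun a ha b hb ↦
    (mem_centralizer_iff.mp ha.1 b hb.2).symm
  have hcZ : c ∈ Z :=
    ⟨pow_card_commutator_mem_centralizer (U.pow_mem huU m) hum, U.pow_mem (U.pow_mem huU m) _⟩
  have hc : ¬IsOfFinOrder c := by simp [c, isOfFinOrder_pow, hu, hm.ne', Nat.card_pos.ne']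
  obtain ⟨e, he, hZe⟩ := hmm.exists_pow_eq_one_of_isOfFinOrder hres Z
  have hce : c ^ e ≠ 1 := fun h ↦ hc (isOfFinOrder_iff_pow_eq_one.mpr ⟨e, he, h⟩)
  refine ⟨Z.powImage e, ne_bot_iff_exists_ne_one.mpr
      ⟨⟨_, Z.pow_mem_powImage e hcZ⟩, fun h ↦ hce (congrArg Subtype.val h)⟩,
    inferInstance, fun a ha b hb ↦ setLike_mul_comm ha hb,
    fun a ha k hk hak ↦ Z.eq_one_of_mem_powImage_of_pow_eq_one e hZe ha hk hak⟩

/-- A finitely generated infinite solvable minimax group with trivial finite residual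
has a non-trivial torsion-free abelian normal subgroup. -/
theorem exists_torsionFree_abelian_normal {G : Type*} [Group G]
    (hfg : Group.FG G) (hsolv : IsSolvable G) (hmm : Minimax G) (hinf : Infinite G)
    (hres : (⨅ (H : Subgroup G) (_ : H.FiniteIndex), H) = ⊥) :
    ∃ A : Subgroup G, A ≠ ⊥ ∧ A.Normal ∧ (∀ a ∈ A, ∀ b ∈ A, a * b = b * a) ∧
      ∀ a ∈ A, ∀ k : ℕ, 0 < k → a ^ k = 1 → a = 1 :=
  exists_torsionFree_abelian_normal_general hsolv hmm hinf hres
end
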